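/- Let m ≥ 2 be an integer, a ≠ 0 and b real constants, g(u) = au + b, and let h : J → ℝ be a smooth function on a nonempty open interval with h(v) ≠ 0 and h'(v) ≠ 0 for all v ∈ J. Suppose that −2a²·h(v)·h'(v)² + h''(v)·( (a·h(v))^{(2m−2)/(2m−1)} + (a·h(v))² ) = 0 for all v ∈ J. Then there exists a constant c₂ ≠ 0 such that h'(v) = c₂·( a^{(2m−2)/(2m−1)} + a²·h(v)^{2m/(2m−1)} )^{(2m−1)/m} for all v ∈ J. -/

import Mathlib

/-- `rootPow m x k` is `x^{k/(2m-1)}`, i.e. the `k`-th power of the real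
`(2m-1)`-th root of `x`, defined as `(sgn(x) * |x|^(1/(2m-1)))^k`. -/
noncomputable def rootPow (m : ℕ) (x : ℝ) (k : ℕ) : ℝ :=
  (Real.sign x * |x| ^ ((2 * (m : ℝ) - 1)⁻¹)) ^ k

/-- For even exponents and nonzero base, `rootPow` is an `rpow` of the absolute value. -/
lemma rootPow_even (m k : ℕ) (hk : Even k) (x : ℝ) (hx : x ≠ 0) :
    rootPow m x k = |x| ^ ((k : ℝ) * (2 * (m : ℝ) - 1)⁻¹) := by
  obtain ⟨j, rfl⟩ := hk
  unfold rootPow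
  rw [mul_pow]
  have hs : (Real.sign x) ^ (j + j) = 1 := by
    have h2 : j + j = 2 * j := by ring
    rcases hx.lt_or_gt with h | h
    · rw [Real.sign_of_neg h, h2, pow_mul]; norm_num
    · rw [Real.sign_of_pos h]; simp
  rw [hs, one_mul, ← Real.rpow_natCast (|x| ^ ((2 * (m : ℝ) - 1)⁻¹)) (j + j),
    ← Real.rpow_mul (abs_nonneg x)]
  congr 1
  push_cast
  ring

theorem homothetical_minimal_surface_linear_case
    (m : ℕ) (hm : 2 ≤ m) (a b : ℝ) (ha : a ≠ 0)
    (J : Set ℝ) (hJ : IsOpen J) (hJc : IsPreconnected J) (hJne : J.Nonempty)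
    (g : ℝ → ℝ) (hgdef : ∀ u : ℝ, g u = a * u + b)
    (h : ℝ → ℝ) (hh : ContDiffOn ℝ (⊤ : ℕ∞) h J)
    (hh0 : ∀ v ∈ J, h v ≠ 0) (hh'0 : ∀ v ∈ J, deriv h v ≠ 0)
    (hODE : ∀ v ∈ J,
      -2 * a ^ 2 * h v * (deriv h v) ^ 2
        + deriv (deriv h) v
            * (rootPow m (a * h v) (2 * m - 2) + (a * h v) ^ 2) = 0) :
    ∃ c₂ : ℝ, c₂ ≠ 0 ∧ ∀ v ∈ J, deriv h v
      = c₂ * (rootPow m a (2 * m - 2) + a ^ 2 * rootPow m (h v) (2 * m))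
              ^ ((2 * (m : ℝ) - 1) / m) := by
  have hm1 : (2 : ℝ) ≤ (m : ℝ) := by exact_mod_cast hm
  have hmR : (m : ℝ) ≠ 0 := by positivity
  set n : ℝ := 2 * (m : ℝ) - 1 with hn_def
  have hn : n ≠ 0 := by rw [hn_def]; nlinarith
  set p : ℝ := (2 * (m : ℝ)) * n⁻¹ with hp_def
  set e : ℝ := (2 * (m : ℝ) - 2) * n⁻¹ with he_def
  set q : ℝ := (2 * (m : ℝ) - 1) / m with hq_def
  have hqp : q * p = 2 := by
    rw [hq_def, hp_def, hn_def]
    have hn2 : (2 * (m : ℝ) - 1) ≠ 0 := hn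
    field_simp
  have hep : e + p = 2 := by
    rw [he_def, hp_def, hn_def]
    have hn2 : (2 * (m : ℝ) - 1) ≠ 0 := hn
    field_simp
    ring
  set A : ℝ := |a| ^ e with hA_def
  set B : ℝ → ℝ := fun x => A + a ^ 2 * |x| ^ p with hB_def
  have hApos : 0 < A := Real.rpow_pos_of_pos (abs_pos.2 ha) e
  have hBpos : ∀ x : ℝ, 0 < B x := by
    intro x
    have : (0:ℝ) ≤ a ^ 2 * |x| ^ p := by positivity
    simp only [hB_def]
    linarith
  -- rewriting the rootPow expressions
  have hk1 : (2 * m - 2 : ℕ) = 2 * (m - 1) := by omega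
  have hcast1 : ((2 * m - 2 : ℕ) : ℝ) = 2 * (m : ℝ) - 2 := by
    have : (2:ℕ) ≤ 2 * m := by omega
    push_cast [Nat.cast_sub this]
    ring
  have hrootA : rootPow m a (2 * m - 2) = A := by
    rw [rootPow_even m _ ⟨m - 1, by omega⟩ a ha, hcast1, hA_def, he_def]
  have hrootH : ∀ v ∈ J, rootPow m (h v) (2 * m) = |h v| ^ p := by
    intro v hv
    rw [rootPow_even m _ ⟨m, by omega⟩ (h v) (hh0 v hv), hp_def]
    push_cast
    rw [hn_def]
  have hrootAH : ∀ v ∈ J, rootPow m (a * h v) (2 * m - 2) = |a * h v| ^ e := by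
    intro v hv
    rw [rootPow_even m _ ⟨m - 1, by omega⟩ _ (mul_ne_zero ha (hh0 v hv)), hcast1, he_def]
  -- derivative of B
  have hB' : ∀ x : ℝ, x ≠ 0 → HasDerivAt B (a ^ 2 * p * |x| ^ p / x) x := by
    intro x hx
    have habs : HasDerivAt (fun y : ℝ => |y|) ((SignType.sign x : ℝ)) x := hasDerivAt_abs hx
    have hxabs : |x| ≠ 0 := abs_ne_zero.2 hx
    have hpow : HasDerivAt (fun y : ℝ => |y| ^ p)
        (p * |x| ^ (p - 1) * (SignType.sign x : ℝ)) x :=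
      (Real.hasDerivAt_rpow_const (p := p) (Or.inl hxabs)).comp x habs
    have hval : a ^ 2 * (p * |x| ^ (p - 1) * (SignType.sign x : ℝ)) = a ^ 2 * p * |x| ^ p / x := by
      rcases hx.lt_or_gt with hlt | hlt
      · have h1 : (SignType.sign x : ℝ) = -1 := by
          simp [sign_eq_neg_one_iff.2 hlt]
        have h2 : |x| = -x := abs_of_neg hlt
        have h3 : |x| ^ (p - 1) = |x| ^ p / |x| := by
          rw [Real.rpow_sub (abs_pos.2 hx), Real.rpow_one]
        rw [h1, h3, h2]
        field_simp
      · have h1 : (SignType.sign x : ℝ) = 1 := by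
          simp [sign_eq_one_iff.2 hlt]
        have h2 : |x| = x := abs_of_pos hlt
        have h3 : |x| ^ (p - 1) = |x| ^ p / |x| := by
          rw [Real.rpow_sub (abs_pos.2 hx), Real.rpow_one]
        rw [h1, h3, h2]
        field_simp
    have := ((hpow.const_mul (a ^ 2)).const_add A)
    rw [hval] at this
    exact this
  -- smoothness facts
  have hdiff : ∀ v ∈ J, HasDerivAt h (deriv h v) v := by
    intro v hv
    exact ((hh.differentiableOn (by simp)).differentiableAt (hJ.mem_nhds hv)).hasDerivAt
  have hh2 : ContDiffOn ℝ 1 (deriv h) J := hh.deriv_of_isOpen hJ (WithTop.coe_le_coe.2 le_top)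
  have hdiff2 : ∀ v ∈ J, HasDerivAt (deriv h) (deriv (deriv h) v) v := by
    intro v hv
    exact ((hh2.differentiableOn (by simp)).differentiableAt (hJ.mem_nhds hv)).hasDerivAt
  -- the conserved quantity
  set φ : ℝ → ℝ := fun v => deriv h v * (B (h v)) ^ (-q) with hφ_def
  have hφ' : ∀ v ∈ J, HasDerivAt φ 0 v := by
    intro v hv
    set w : ℝ := h v with hw_def
    set wp : ℝ := deriv h v with hwp_def
    set wpp : ℝ := deriv (deriv h) v with hwpp_def
    have hw : w ≠ 0 := hh0 v hv
    have hcomp : HasDerivAt (fun t => B (h t)) (a ^ 2 * p * |w| ^ p / w * wp) v :=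
      (hB' w hw).comp v (hdiff v hv)
    have hBw : B w ≠ 0 := (hBpos w).ne'
    have hrpow : HasDerivAt (fun t => (B (h t)) ^ (-q))
        (-q * (B w) ^ (-q - 1) * (a ^ 2 * p * |w| ^ p / w * wp)) v :=
      by have h1 := Real.hasDerivAt_rpow_const (x := B w) (p := -q) (Or.inl hBw); exact h1.comp v hcomp
    have hmul : HasDerivAt φ
        (wpp * (B w) ^ (-q) + wp * (-q * (B w) ^ (-q - 1) * (a ^ 2 * p * |w| ^ p / w * wp))) v :=
      (hdiff2 v hv).mul hrpow
    -- now show the derivative value is zero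
    -- ODE in rpow form
    have hODE' : wpp * (|a * w| ^ e + (a * w) ^ 2) = 2 * a ^ 2 * w * wp ^ 2 := by
      have := hODE v hv
      rw [hrootAH v hv] at this
      simp only [← hw_def, ← hwp_def, ← hwpp_def] at this
      linarith
    have habse : (0:ℝ) < |w| ^ e := Real.rpow_pos_of_pos (abs_pos.2 hw) e
    have habsp : (0:ℝ) < |w| ^ p := Real.rpow_pos_of_pos (abs_pos.2 hw) p
    have habs2 : |w| ^ e * |w| ^ p = w ^ 2 := by
      rw [← Real.rpow_add (abs_pos.2 hw), hep]
      rw [show (2:ℝ) = ((2:ℕ):ℝ) by norm_num, Real.rpow_natCast, sq_abs]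
    have hfact : |a * w| ^ e + (a * w) ^ 2 = |w| ^ e * B w := by
      rw [hB_def]
      simp only
      rw [abs_mul, Real.mul_rpow (abs_nonneg a) (abs_nonneg w)]
      have : (a * w) ^ 2 = a ^ 2 * (|w| ^ e * |w| ^ p) := by rw [habs2]; ring
      rw [this, hA_def]
      ring
    have hkey : wpp * B w * |w| ^ e = 2 * a ^ 2 * w * wp ^ 2 := by
      rw [hfact] at hODE'
      linarith [hODE']
    have hbracket : wpp * B w = 2 * a ^ 2 * |w| ^ p * wp ^ 2 / w := by
      rw [eq_div_iff hw]
      apply mul_right_cancel₀ habse.ne'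
      calc wpp * B w * w * |w| ^ e = (wpp * B w * |w| ^ e) * w := by ring
        _ = (2 * a ^ 2 * w * wp ^ 2) * w := by rw [hkey]
        _ = 2 * a ^ 2 * wp ^ 2 * w ^ 2 := by ring
        _ = 2 * a ^ 2 * wp ^ 2 * (|w| ^ e * |w| ^ p) := by rw [habs2]
        _ = 2 * a ^ 2 * |w| ^ p * wp ^ 2 * |w| ^ e := by ring
    have hsplit : (B w) ^ (-q) = (B w) ^ (-q - 1) * B w := by
      nth_rewrite 1 [show -q = (-q - 1) + 1 by ring]
      rw [Real.rpow_add (hBpos w), Real.rpow_one]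
    have hzero : wpp * (B w) ^ (-q)
        + wp * (-q * (B w) ^ (-q - 1) * (a ^ 2 * p * |w| ^ p / w * wp)) = 0 := by
      rw [hsplit]
      have h1 : wpp * ((B w) ^ (-q - 1) * B w)
          + wp * (-q * (B w) ^ (-q - 1) * (a ^ 2 * p * |w| ^ p / w * wp))
          = (B w) ^ (-q - 1) * (wpp * B w - (q * p) * (a ^ 2 * |w| ^ p * wp ^ 2 / w)) := by
        ring
      rw [h1, hqp, hbracket]
      ring
    rw [← hzero]
    exact hmul
  -- constancy of φ on J
  obtain ⟨v₀, hv₀⟩ := hJne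
  have hconst : ∀ v ∈ J, φ v = φ v₀ := by
    intro v hv
    apply Convex.is_const_of_fderivWithin_eq_zero (𝕜 := ℝ) hJc.convex
    · intro x hx
      exact ((hφ' x hx).differentiableAt).differentiableWithinAt
    · intro x hx
      have := ((hφ' x hx).hasFDerivAt.hasFDerivWithinAt).fderivWithin (hJ.uniqueDiffOn x hx)
      rw [this]
      ext
      simp
    · exact hv
    · exact hv₀
  refine ⟨φ v₀, ?_, ?_⟩
  · have h1 : deriv h v₀ ≠ 0 := hh'0 v₀ hv₀
    have h2 : (B (h v₀)) ^ (-q) ≠ 0 := (Real.rpow_pos_of_pos (hBpos _) _).ne'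
    exact mul_ne_zero h1 h2
  · intro v hv
    have hq' : (0:ℝ) < (B (h v)) ^ q := Real.rpow_pos_of_pos (hBpos _) q
    have hkey : deriv h v = φ v₀ * (B (h v)) ^ q := by
      have h2 : φ v₀ = deriv h v * B (h v) ^ (-q) := (hconst v hv).symm
      rw [h2, Real.rpow_neg (hBpos (h v)).le]
      field_simp
    rw [hrootA, hrootH v hv]
    exact hkey
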